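/- arXiv:math/0505367 — 2 statements merged into one kernel-verified Lean document; each statement's English description precedes it below -/
import Mathlib

section
/- Let H be a Hilbert space and let A, B, C be von Neumann subalgebras of B(H) with A ⊆ B ⊆ C. If (A' ∩ B)' ∩ B = A and (B' ∩ C)' ∩ C = B, then (A' ∩ C)' ∩ C = A. -/
/-- Transitivity of normality: if `(A' ∩ B)' ∩ B = A` and `(B' ∩ C)' ∩ C = B`
for von Neumann subalgebras `A ⊆ B ⊆ C` of `B(H)`, then `(A' ∩ C)' ∩ C = A`. -/
theorem normal_trans {H : Type*} [NormedAddCommGroup H] [InnerProductSpace ℂ H]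
    [CompleteSpace H] (A B C : VonNeumannAlgebra H)
    (hAB : (A : Set (H →L[ℂ] H)) ⊆ B) (hBC : (B : Set (H →L[ℂ] H)) ⊆ C)
    (h1 : (Set.centralizer (A : Set (H →L[ℂ] H)) ∩ B).centralizer ∩ B = A)
    (h2 : (Set.centralizer (B : Set (H →L[ℂ] H)) ∩ C).centralizer ∩ C = B) :
    (Set.centralizer (A : Set (H →L[ℂ] H)) ∩ C).centralizer ∩ C = A := by
  apply Set.Subset.antisymm
  · intro x hx
    have hxB : x ∈ (B : Set (H →L[ℂ] H)) := by
      rw [← h2]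
      exact ⟨Set.centralizer_subset
        (Set.inter_subset_inter_left _ (Set.centralizer_subset hAB)) hx.1, hx.2⟩
    rw [← h1]
    exact ⟨Set.centralizer_subset (Set.inter_subset_inter_right _ hBC) hx.1, hxB⟩
  · intro a ha
    exact ⟨fun m hm => (hm.1 a ha).symm, hBC (hAB ha)⟩
end

section
/- Let M be a von Neumann algebra, σ a unital *-endomorphism of M, T ∈ M a unitary, and w₁ ∈ M an element satisfying w₁ ∈ Hom(σ, σ²) (i.e. w₁ σ(x) = σ²(x) w₁ for all x ∈ M) and w₁² = σ(w₁) w₁. Define w̃₁ := T* σ(T*) w₁ T. Then w̃₁ w̃₁ = T* σ(T*) σ²(T*) σ(w₁) w₁ T. -/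
/-- The intertwiner space `Hom(ρ, ρ') = {a ∈ M : a ρ(x) = ρ'(x) a ∀ x}`, as a linear subspace. -/
def homSet {M : Type*} [Ring M] [Algebra ℂ M] (ρ ρ' : M → M) : Submodule ℂ M where
  carrier := {a | ∀ x, a * ρ x = ρ' x * a}
  add_mem' := by intro a b ha hb x; rw [add_mul, mul_add, ha x, hb x]
  zero_mem' := by intro x; rw [zero_mul, mul_zero]
  smul_mem' := by intro c a ha x; rw [smul_mul_assoc, ha x, mul_smul_comm]

/-- Core computation for associativity of the mirror Q-system (Theorem 3.8):
if `w₁ ∈ Hom(σ, σ²)` and `w₁² = σ(w₁) w₁`, then with `w̃₁ := T* σ(T*) w₁ T`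
one has `w̃₁ w̃₁ = T* σ(T*) σ²(T*) σ(w₁) w₁ T`. -/
theorem mirror_associativity {M : Type*} [Ring M] [StarRing M] [Algebra ℂ M]
    [StarModule ℂ M] (σ : M →⋆ₐ[ℂ] M) (T w₁ : M)
    (hT : T * star T = 1) (hT' : star T * T = 1)
    (hw1 : w₁ ∈ homSet (⇑σ) (⇑σ ∘ ⇑σ)) (hrel : w₁ * w₁ = σ w₁ * w₁) :
    (star T * σ (star T) * w₁ * T) * (star T * σ (star T) * w₁ * T) =
      star T * σ (star T) * σ (σ (star T)) * σ w₁ * w₁ * T := by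
  have h := hw1 (star T)
  simp only [Function.comp_apply] at h
  calc (star T * σ (star T) * w₁ * T) * (star T * σ (star T) * w₁ * T)
      = star T * σ (star T) * (w₁ * (T * star T) * σ (star T)) * w₁ * T := by noncomm_ring
    _ = star T * σ (star T) * (w₁ * σ (star T)) * w₁ * T := by rw [hT, mul_one]
    _ = star T * σ (star T) * (σ (σ (star T)) * w₁) * w₁ * T := by rw [h]
    _ = star T * σ (star T) * σ (σ (star T)) * (w₁ * w₁) * T := by noncomm_ring
    _ = star T * σ (star T) * σ (σ (star T)) * σ w₁ * w₁ * T := by rw [hrel]; noncomm_ring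
end
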